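/- Let χ ∈ ℝ with a ≤ χ − 1 and χ ≤ b. Then f′_{(χ,0)}(w) ≠ 0 for every w ∈ ℂ ∖ ℝ; in particular, the liquid region 𝓛 contains no point (χ, η) with η = 0. -/

import Mathlib

open MeasureTheory Complex Filter Set

noncomputable section

/-- The support of a measure on `ℝ`. -/
def msupport (μ : Measure ℝ) : Set ℝ := {x | ∀ U ∈ nhds x, μ U ≠ 0}

/-- The Cauchy transform `C(w) = ∫ (w - x)⁻¹ dμ(x)`. -/
def cauchy (μ : Measure ℝ) (w : ℂ) : ℂ := ∫ x, (w - (x : ℂ))⁻¹ ∂μ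

/-- `f′_{(χ,η)}(w) = C(w) + Log (w - χ) - Log (w - χ - η + 1)`. -/
def fprime (μ : Measure ℝ) (χ η : ℝ) (w : ℂ) : ℂ :=
  cauchy μ w + Complex.log (w - (χ : ℂ)) - Complex.log (w - (χ : ℂ) - (η : ℂ) + 1)

/-- `χ_L(w) = w + (w - w̄)(e^{C(w̄)} - 1)/(e^{C(w)} - e^{C(w̄)})`. -/
def chiL (μ : Measure ℝ) (w : ℂ) : ℂ :=
  w + (w - (starRingEnd ℂ) w) * (Complex.exp (cauchy μ ((starRingEnd ℂ) w)) - 1) /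
    (Complex.exp (cauchy μ w) - Complex.exp (cauchy μ ((starRingEnd ℂ) w)))

/-- `η_L(w) = 1 + (w - w̄)(e^{C(w)} - 1)(e^{C(w̄)} - 1)/(e^{C(w)} - e^{C(w̄)})`. -/
def etaL (μ : Measure ℝ) (w : ℂ) : ℂ :=
  1 + (w - (starRingEnd ℂ) w) * (Complex.exp (cauchy μ w) - 1) *
      (Complex.exp (cauchy μ ((starRingEnd ℂ) w)) - 1) /
    (Complex.exp (cauchy μ w) - Complex.exp (cauchy μ ((starRingEnd ℂ) w)))

/-- The liquid region. -/
def liquid (μ : Measure ℝ) (a b : ℝ) : Set (ℝ × ℝ) :=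
  {p | a ≤ p.1 + p.2 - 1 ∧ p.1 + p.2 - 1 ≤ p.1 ∧ p.1 ≤ b ∧ 0 ≤ p.2 ∧ p.2 ≤ 1 ∧
    ∃ w : ℂ, w.im ≠ 0 ∧ fprime μ p.1 p.2 w = 0}

/-!
If `f′_{(χ,0)}(w) = 0` at a non-real `w`, then, as `Log (w - χ + 1) - Log (w - χ)` is
`∫_{χ-1}^{χ} (w - x)⁻¹ dx`, the measure `μ` has the same Cauchy transform at `w` as Lebesgue measure
`λ` on `[χ - 1, χ]`. Both have mass one, and the mass together with `C(w)` determines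
`∫ q(x) / |w - x|²` for every real quadratic `q`. For `q(x) = (x - χ + 1)(x - χ)` the integrand is
`≤ 0` on `[χ - 1, χ]`, where `μ ≤ λ`, and `> 0` off it, so `μ` puts no mass outside `[χ - 1, χ]`.
This is incompatible with `a, b ∈ supp μ` and `b - a > 1`.
-/

section CauchyKernel

variable {w : ℂ}

lemma sub_ofReal_mem_slitPlane (hw : w.im ≠ 0) (x : ℝ) : w - x ∈ slitPlane :=
  Or.inr (by simpa using hw)

lemma continuous_inv_sub_ofReal (hw : w.im ≠ 0) : Continuous fun x : ℝ ↦ (w - x)⁻¹ :=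
  (continuous_const.sub continuous_ofReal).inv₀
    fun x ↦ slitPlane_ne_zero (sub_ofReal_mem_slitPlane hw x)

lemma norm_inv_sub_ofReal_le (hw : w.im ≠ 0) (x : ℝ) : ‖(w - x)⁻¹‖ ≤ |w.im|⁻¹ := by
  rw [norm_inv]
  refine inv_anti₀ (abs_pos.mpr hw) ?_
  simpa using abs_im_le_norm (w - x)

lemma integrable_inv_sub_ofReal (μ : Measure ℝ) [IsFiniteMeasure μ] (hw : w.im ≠ 0) :
    Integrable (fun x : ℝ ↦ (w - x)⁻¹) μ :=
  .of_bound (continuous_inv_sub_ofReal hw).aestronglyMeasurable _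
    (.of_forall (norm_inv_sub_ofReal_le hw))

lemma cauchy_volume_restrict_Ioc (hw : w.im ≠ 0) {c d : ℝ} (hcd : c ≤ d) :
    cauchy (volume.restrict (Ioc c d)) w = log (w - c) - log (w - d) := by
  have hderiv (x : ℝ) : HasDerivAt (fun y : ℝ ↦ -log (w - y)) (w - x)⁻¹ x := by
    have := (((hasDerivAt_id (x : ℂ)).const_sub w).clog
      (sub_ofReal_mem_slitPlane hw x)).neg.comp_ofReal
    simpa [neg_div, one_div] using this
  rw [cauchy, ← intervalIntegral.integral_of_le hcd,
    intervalIntegral.integral_eq_sub_of_hasDerivAt (fun x _ ↦ hderiv x)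
      ((continuous_inv_sub_ofReal hw).intervalIntegrable c d)]
  ring

end CauchyKernel

def quadraticKernel (w : ℂ) (c d x : ℝ) : ℝ := (x - c) * (x - d) / normSq (w - x)

section QuadraticKernel

variable {w : ℂ} {c d x : ℝ}

/-- Partial fractions: `(x - c)(x - d) / ((x - w)(x - w̄)) = 1 + 2 Re (A / (x - w))` with
`A = (w - c)(w - d) / (w - w̄)`. -/
lemma quadraticKernel_eq (hw : w.im ≠ 0) (x : ℝ) :
    quadraticKernel w c d x = 1 + (I * (w - c) * (w - d) / w.im * (w - x)⁻¹).re := by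
  have hn : (w.re - x) * (w.re - x) + w.im * w.im ≠ 0 := by
    nlinarith [sq_nonneg (w.re - x), sq_pos_of_ne_zero hw]
  simp only [quadraticKernel, normSq_apply, sub_re, ofReal_re, sub_im, ofReal_im, sub_zero, mul_re,
    div_re, I_re, zero_mul, I_im, one_mul, zero_sub, neg_mul, mul_im, zero_add, mul_zero, add_zero,
    zero_div, inv_re, div_im, inv_im]
  field_simp
  ring

variable (μ : Measure ℝ) [IsFiniteMeasure μ]

lemma integrable_re_mul_inv_sub_ofReal (hw : w.im ≠ 0) (γ : ℂ) :
    Integrable (fun x : ℝ ↦ (γ * (w - x)⁻¹).re) μ :=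
  ((integrable_inv_sub_ofReal μ hw).const_mul γ).re

lemma integrable_quadraticKernel (hw : w.im ≠ 0) : Integrable (quadraticKernel w c d) μ := by
  rw [funext (quadraticKernel_eq hw)]
  exact (integrable_const 1).add (integrable_re_mul_inv_sub_ofReal μ hw _)

lemma integral_quadraticKernel (hw : w.im ≠ 0) :
    ∫ x, quadraticKernel w c d x ∂μ =
      μ.real univ + (I * (w - c) * (w - d) / w.im * cauchy μ w).re := by
  set γ := I * (w - c) * (w - d) / w.im
  have hre : ∫ x, (γ * (w - x)⁻¹).re ∂μ = (∫ x, γ * (w - x)⁻¹ ∂μ).re :=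
    integral_re ((integrable_inv_sub_ofReal μ hw).const_mul γ)
  rw [funext (quadraticKernel_eq hw),
    integral_add (integrable_const 1) (integrable_re_mul_inv_sub_ofReal μ hw γ), integral_const,
    hre, integral_const_mul, cauchy, smul_eq_mul, mul_one]

lemma quadraticKernel_nonpos (hx : x ∈ Icc c d) : quadraticKernel w c d x ≤ 0 :=
  div_nonpos_of_nonpos_of_nonneg (mul_nonpos_of_nonneg_of_nonpos (by linarith [hx.1])
    (by linarith [hx.2])) (normSq_nonneg _)

lemma quadraticKernel_nonneg (hcd : c ≤ d) (hx : x ∉ Ioo c d) : 0 ≤ quadraticKernel w c d x := by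
  refine div_nonneg ?_ (normSq_nonneg _)
  rcases not_and_or.mp hx with hc | hd
  · exact mul_nonneg_of_nonpos_of_nonpos (by linarith [not_lt.mp hc]) (by linarith [not_lt.mp hc])
  · exact mul_nonneg (by linarith [not_lt.mp hd]) (by linarith [not_lt.mp hd])

lemma quadraticKernel_pos (hw : w.im ≠ 0) (hcd : c ≤ d) (hx : x ∉ Icc c d) :
    0 < quadraticKernel w c d x := by
  refine div_pos ?_ (normSq_pos.mpr (slitPlane_ne_zero (sub_ofReal_mem_slitPlane hw x)))
  rcases not_and_or.mp hx with hc | hd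
  · exact mul_pos_of_neg_of_neg (by linarith [not_le.mp hc]) (by linarith [not_le.mp hc])
  · exact mul_pos (by linarith [not_le.mp hd]) (by linarith [not_le.mp hd])

end QuadraticKernel

lemma ae_eq_zero_of_notMem_of_integral_le_setIntegral {α : Type*} [MeasurableSpace α]
    {μ ν : Measure α} (hμν : μ ≤ ν) {s : Set α} (hs : MeasurableSet s) {g : α → ℝ}
    (hgμ : Integrable g μ) (hgν : IntegrableOn g s ν) (hg_s : ∀ x ∈ s, g x ≤ 0)
    (hg_sc : ∀ x ∉ s, 0 ≤ g x) (h : ∫ x, g x ∂μ ≤ ∫ x in s, g x ∂ν) :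
    ∀ᵐ x ∂μ, x ∉ s → g x = 0 := by
  have h_s : ∫ x in s, g x ∂ν ≤ ∫ x in s, g x ∂μ := by
    have := integral_mono_measure (Measure.restrict_mono subset_rfl hμν)
      ((ae_restrict_iff' hs).mpr (.of_forall fun x hx ↦ neg_nonneg.mpr (hg_s x hx))) hgν.neg
    simpa only [integral_neg, neg_le_neg_iff] using this
  have h_sc : ∫ x in sᶜ, g x ∂μ = 0 :=
    le_antisymm (by linarith [integral_add_compl hs hgμ]) (setIntegral_nonneg hs.compl hg_sc)
  have := (setIntegral_eq_zero_iff_of_nonneg_ae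
    ((ae_restrict_iff' hs.compl).mpr (.of_forall hg_sc)) hgμ.integrableOn).mp h_sc
  exact (ae_restrict_iff' hs.compl).mp this

lemma msupport_subset_of_measure_compl_eq_zero {μ : Measure ℝ} {F : Set ℝ} (hF : IsClosed F)
    (h : μ Fᶜ = 0) : msupport μ ⊆ F := fun _ hx ↦
  by_contra fun hxF ↦ hx Fᶜ (hF.isOpen_compl.mem_nhds hxF) h

lemma measure_compl_Icc_eq_zero_of_fprime_eq_zero (μ : Measure ℝ) [IsProbabilityMeasure μ]
    (hle : μ ≤ volume) {χ : ℝ} {w : ℂ} (hw : w.im ≠ 0) (hroot : fprime μ χ 0 w = 0) :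
    μ (Icc (χ - 1) χ)ᶜ = 0 := by
  have hχ : χ - 1 ≤ χ := by linarith
  set s := Ioc (χ - 1) χ
  have hcauchy : cauchy μ w = cauchy (volume.restrict s) w := by
    have hshift : w - ((χ - 1 : ℝ) : ℂ) = w - χ - (0 : ℝ) + 1 := by push_cast; ring
    rw [cauchy_volume_restrict_Ioc hw hχ, hshift, ← sub_eq_zero, ← hroot, fprime]
    ring
  have hmass : (volume.restrict s).real univ = μ.real univ := by
    simp [s, Real.volume_real_Ioc_of_le hχ]
  have hint : ∫ x, quadraticKernel w (χ - 1) χ x ∂μ = ∫ x in s, quadraticKernel w (χ - 1) χ x := by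
    rw [integral_quadraticKernel μ hw, integral_quadraticKernel _ hw, hcauchy, hmass]
  have hzero := ae_eq_zero_of_notMem_of_integral_le_setIntegral hle measurableSet_Ioc
    (integrable_quadraticKernel μ hw) (integrable_quadraticKernel _ hw)
    (fun x hx ↦ quadraticKernel_nonpos (Ioc_subset_Icc_self hx))
    (fun x hx ↦ quadraticKernel_nonneg hχ fun hx' ↦ hx (Ioo_subset_Ioc_self hx')) hint.le
  refine measure_mono_null (fun x hx ↦ ?_) (ae_iff.mp hzero)
  exact fun h ↦ (quadraticKernel_pos hw hχ hx).ne' (h fun hxs ↦ hx (Ioc_subset_Icc_self hxs))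

theorem fprime_eta_zero_no_nonreal_root_general (μ : Measure ℝ) (a b : ℝ) [IsProbabilityMeasure μ]
    (hle : μ ≤ volume)
    (ha : a ∈ msupport μ) (hb : b ∈ msupport μ) (hab : 1 < b - a)
    (χ : ℝ) :
    (∀ w : ℂ, w.im ≠ 0 → fprime μ χ 0 w ≠ 0) ∧
    ∀ p ∈ liquid μ a b, p.2 ≠ 0 := by
  have hno_root (χ : ℝ) (w : ℂ) (hw : w.im ≠ 0) : fprime μ χ 0 w ≠ 0 := fun hroot ↦ by
    have hsupp := msupport_subset_of_measure_compl_eq_zero isClosed_Icc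
      (measure_compl_Icc_eq_zero_of_fprime_eq_zero μ hle hw hroot)
    linarith [(hsupp ha).1, (hsupp hb).2]
  refine ⟨hno_root χ, ?_⟩
  rintro ⟨χ', η⟩ ⟨-, -, -, -, -, w, hw, hroot⟩ rfl
  exact hno_root χ' w hw hroot

/-- For `χ` with `a ≤ χ - 1` and `χ ≤ b`, the function `f′_{(χ,0)}` has no non-real
zeros; in particular, the liquid region contains no point with `η = 0`. -/
theorem fprime_eta_zero_no_nonreal_root (μ : Measure ℝ) (a b : ℝ) [IsProbabilityMeasure μ]
    (hle : μ ≤ volume) (hsupp : msupport μ ⊆ Set.Icc a b)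
    (ha : a ∈ msupport μ) (hb : b ∈ msupport μ) (hab : 1 < b - a)
    (χ : ℝ) (h1 : a ≤ χ - 1) (h2 : χ ≤ b) :
    (∀ w : ℂ, w.im ≠ 0 → fprime μ χ 0 w ≠ 0) ∧
    ∀ p ∈ liquid μ a b, p.2 ≠ 0 :=
  fprime_eta_zero_no_nonreal_root_general μ a b hle ha hb hab χ
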